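/- Fix ε > 0 and let B_ε = { z ∈ ℂ : |z − 1| ≤ 1 − ε }. Then there exists N such that for all n ≥ N, D_{2n}(a) ≠ 0 for all a ∈ B_ε. -/

import Mathlib

/-- The adsorbing Dyck path partition function `D_{2n}(a)` for complex `a`. -/
noncomputable def dyckPFC (n : ℕ) (a : ℂ) : ℂ :=
  ∑ ℓ ∈ Finset.range (n + 1),
    ((2 * ℓ + 1 : ℂ) / (n + ℓ + 1)) * (Nat.choose (2 * n) (n + ℓ) : ℂ) * (a - 1) ^ ℓ

/-!
Dividing by the Catalan number `C_n = binom(2n, n) / (n + 1)` and writing `w = a - 1`,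
`D_{2n}(a) / C_n = ∑ q_n(ℓ) w^ℓ` with `0 ≤ q_n(ℓ) ≤ 2ℓ + 1` and `q_n(ℓ) → 2ℓ + 1`. By dominated
convergence this converges uniformly on `‖w‖ ≤ 1 - ε` to `∑ (2ℓ + 1) w^ℓ = (1 + w) / (1 - w)^2`,
whose modulus is at least `(1 - ‖w‖) / 4`, so it cannot vanish there for large `n`.
-/

open Filter Topology Metric

section PowerSeries

variable {𝕜 : Type*} [NormedField 𝕜]

theorem summable_mul_pow_of_norm_le [CompleteSpace 𝕜] {a : ℕ → 𝕜} {M : ℕ → ℝ} {r : ℝ} {w : 𝕜}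
    (ha : ∀ ℓ, ‖a ℓ‖ ≤ M ℓ) (hM : Summable fun ℓ ↦ M ℓ * r ^ ℓ) (hw : ‖w‖ ≤ r) :
    Summable fun ℓ ↦ a ℓ * w ^ ℓ :=
  hM.of_norm_bounded fun ℓ ↦ by
    rw [norm_mul, norm_pow]
    exact mul_le_mul (ha ℓ) (pow_le_pow_left₀ (norm_nonneg w) hw ℓ) (by positivity)
      ((norm_nonneg _).trans (ha ℓ))

/-- Tannery's theorem (`tendsto_tsum_of_dominated_convergence`), uniformly on a disc. -/
theorem tendstoUniformlyOn_tsum_mul_pow [CompleteSpace 𝕜] {ι : Type*} {l : Filter ι} [l.NeBot]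
    {q : ι → ℕ → 𝕜} {c : ℕ → 𝕜} {M : ℕ → ℝ} {r : ℝ} (hqM : ∀ i ℓ, ‖q i ℓ‖ ≤ M ℓ)
    (hM : Summable fun ℓ ↦ M ℓ * r ^ ℓ) (hqc : ∀ ℓ, Tendsto (q · ℓ) l (𝓝 (c ℓ))) :
    TendstoUniformlyOn (fun i w ↦ ∑' ℓ, q i ℓ * w ^ ℓ) (fun w ↦ ∑' ℓ, c ℓ * w ^ ℓ) l
      (closedBall 0 r) := by
  rcases lt_or_ge r 0 with hr | hr
  · simpa [closedBall_eq_empty.2 hr] using tendstoUniformlyOn_empty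
  have hcM (ℓ : ℕ) : ‖c ℓ‖ ≤ M ℓ := le_of_tendsto' (hqc ℓ).norm (hqM · ℓ)
  have hdiff (i : ι) (ℓ : ℕ) : ‖‖q i ℓ - c ℓ‖ * r ^ ℓ‖ ≤ 2 * (M ℓ * r ^ ℓ) := by
    rw [norm_mul, norm_norm, Real.norm_of_nonneg (by positivity), ← mul_assoc]
    gcongr
    linarith [norm_sub_le (q i ℓ) (c ℓ), hqM i ℓ, hcM ℓ]
  have herr : Tendsto (fun i ↦ ∑' ℓ, ‖q i ℓ - c ℓ‖ * r ^ ℓ) l (𝓝 0) := by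
    simpa using tendsto_tsum_of_dominated_convergence (hM.mul_left 2)
      (fun ℓ ↦ ((hqc ℓ).sub_const (c ℓ)).norm.mul_const (r ^ ℓ))
      (Eventually.of_forall (hdiff ·))
  rw [Metric.tendstoUniformlyOn_iff]
  intro ε hε
  filter_upwards [herr.eventually_lt_const hε] with i hi w hw
  rw [mem_closedBall, dist_zero_right] at hw
  have hterm (ℓ : ℕ) : ‖(q i ℓ - c ℓ) * w ^ ℓ‖ ≤ ‖q i ℓ - c ℓ‖ * r ^ ℓ := by
    rw [norm_mul, norm_pow]
    gcongr
  have hsum : Summable fun ℓ ↦ ‖q i ℓ - c ℓ‖ * r ^ ℓ :=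
    (hM.mul_left 2).of_norm_bounded (hdiff i)
  calc dist (∑' ℓ, c ℓ * w ^ ℓ) (∑' ℓ, q i ℓ * w ^ ℓ)
      = ‖∑' ℓ, (q i ℓ - c ℓ) * w ^ ℓ‖ := by
        rw [dist_eq_norm', ← (summable_mul_pow_of_norm_le (hqM i) hM hw).tsum_sub
          (summable_mul_pow_of_norm_le hcM hM hw)]
        simp only [sub_mul]
    _ ≤ ∑' ℓ, ‖q i ℓ - c ℓ‖ * r ^ ℓ := tsum_of_norm_bounded hsum.hasSum hterm
    _ < ε := hi

theorem hasSum_two_mul_add_one_mul_pow [CompleteSpace 𝕜] {w : 𝕜} (hw : ‖w‖ < 1) :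
    HasSum (fun ℓ : ℕ ↦ (2 * ℓ + 1) * w ^ ℓ) ((1 + w) / (1 - w) ^ 2) := by
  have hw1 : 1 - w ≠ 0 := by
    rintro h
    simp [← sub_eq_zero.1 h] at hw
  rw [show (1 + w) / (1 - w) ^ 2 = 2 * (w / (1 - w) ^ 2) + (1 - w)⁻¹ by field_simp; ring]
  exact (((hasSum_coe_mul_geometric_of_norm_lt_one hw).mul_left 2).add
    (hasSum_geometric_of_norm_lt_one hw)).congr_fun fun ℓ ↦ by ring

theorem le_norm_one_add_div_one_sub_sq {w : 𝕜} (hw : ‖w‖ < 1) :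
    (1 - ‖w‖) / 4 ≤ ‖(1 + w) / (1 - w) ^ 2‖ := by
  have hnum : 1 - ‖w‖ ≤ ‖1 + w‖ := by
    simpa using norm_sub_norm_le (1 : 𝕜) (-w)
  have hden : ‖1 - w‖ ≤ 2 := by
    linarith [norm_sub_le (1 : 𝕜) w, norm_one (α := 𝕜)]
  have hden0 : 0 < ‖1 - w‖ := by
    refine norm_pos_iff.2 fun h ↦ ?_
    simp [← sub_eq_zero.1 h] at hw
  rw [norm_div, norm_pow]
  gcongr
  nlinarith

end PowerSeries

theorem Nat.cast_choose_succ_right {K : Type*} [Field K] [CharZero K] (N k : ℕ) :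
    (N.choose (k + 1) : K) = N.choose k * ((N - k) / (k + 1)) := by
  rw [Nat.cast_choose_eq_descPochhammer_div, Nat.cast_choose_eq_descPochhammer_div,
    descPochhammer_succ_eval, Nat.factorial_succ]
  push_cast
  field_simp

theorem tendsto_natCast_add_div_natCast_add (b c : ℝ) :
    Tendsto (fun n : ℕ ↦ (n + b) / (n + c)) atTop (𝓝 1) := by
  have hb : Tendsto (fun n : ℕ ↦ b / (n + c)) atTop (𝓝 0) :=
    tendsto_const_nhds.div_atTop (tendsto_atTop_add_const_right _ c tendsto_natCast_atTop_atTop)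
  simpa [add_div] using (tendsto_natCast_div_add_atTop c).add hb

theorem tendsto_choose_add_div_choose_middle (ℓ : ℕ) :
    Tendsto (fun n : ℕ ↦ ((2 * n).choose (n + ℓ) : ℝ) / (2 * n).choose n) atTop (𝓝 1) := by
  induction ℓ with
  | zero =>
    refine tendsto_const_nhds.congr fun n ↦ ?_
    have : ((2 * n).choose n : ℝ) ≠ 0 := by exact_mod_cast (Nat.choose_pos (by omega)).ne'
    simp [this]
  | succ ℓ ih =>
    have hstep : Tendsto (fun n : ℕ ↦ ((n : ℝ) - ℓ) / (n + (ℓ + 1))) atTop (𝓝 1) := by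
      simpa [sub_eq_add_neg] using tendsto_natCast_add_div_natCast_add (-ℓ) (ℓ + 1)
    have h := ih.mul hstep
    rw [one_mul] at h
    refine h.congr fun n ↦ ?_
    rw [← add_assoc n ℓ 1, Nat.cast_choose_succ_right]
    push_cast
    ring

/-- The coefficient of `(a - 1)^ℓ` in `dyckPFC n a` divided by the Catalan number
`binom(2n, n) / (n + 1)`, the coefficient for `ℓ = 0`. -/
noncomputable def dyckRatio (n ℓ : ℕ) : ℝ :=
  (2 * ℓ + 1) * ((n + 1) / (n + ℓ + 1)) * ((2 * n).choose (n + ℓ) / (2 * n).choose n)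

theorem dyckPFC_eq_mul_tsum (n : ℕ) (a : ℂ) :
    dyckPFC n a = ((2 * n).choose n / (n + 1) : ℂ) * ∑' ℓ, (dyckRatio n ℓ : ℂ) * (a - 1) ^ ℓ := by
  have hvanish : ∀ ℓ ∉ Finset.range (n + 1), (dyckRatio n ℓ : ℂ) * (a - 1) ^ ℓ = 0 := by
    intro ℓ hℓ
    rw [Finset.mem_range, not_lt] at hℓ
    simp [dyckRatio, Nat.choose_eq_zero_of_lt (by omega : 2 * n < n + ℓ)]
  have hcentral : ((2 * n).choose n : ℂ) ≠ 0 := by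
    exact_mod_cast (Nat.choose_pos (by omega)).ne'
  rw [tsum_eq_sum hvanish, Finset.mul_sum, dyckPFC]
  refine Finset.sum_congr rfl fun ℓ _ ↦ ?_
  push_cast [dyckRatio]
  field_simp

theorem dyckRatio_nonneg (n ℓ : ℕ) : 0 ≤ dyckRatio n ℓ := by
  unfold dyckRatio
  positivity

theorem dyckRatio_le (n ℓ : ℕ) : dyckRatio n ℓ ≤ 2 * ℓ + 1 := by
  have hcentral : (0 : ℝ) < (2 * n).choose n := by exact_mod_cast Nat.choose_pos (by omega)
  have hmiddle : ((2 * n).choose (n + ℓ) : ℝ) ≤ (2 * n).choose n := by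
    have h := Nat.choose_le_middle (n + ℓ) (2 * n)
    rwa [Nat.mul_div_cancel_left n two_pos, ← Nat.cast_le (α := ℝ)] at h
  unfold dyckRatio
  calc (2 * ℓ + 1) * ((n + 1) / (n + ℓ + 1)) * ((2 * n).choose (n + ℓ) / (2 * n).choose n : ℝ)
      ≤ (2 * ℓ + 1) * 1 * 1 := by
        gcongr
        · exact div_le_one_of_le₀ (by linarith [ℓ.cast_nonneg (α := ℝ)]) (by positivity)
        · exact div_le_one_of_le₀ hmiddle hcentral.le
    _ = 2 * ℓ + 1 := by ring

theorem tendsto_dyckRatio (ℓ : ℕ) :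
    Tendsto (dyckRatio · ℓ) atTop (𝓝 (2 * ℓ + 1)) := by
  have hfrac : Tendsto (fun n : ℕ ↦ ((n : ℝ) + 1) / (n + (ℓ + 1))) atTop (𝓝 1) :=
    tendsto_natCast_add_div_natCast_add 1 (ℓ + 1)
  simpa [dyckRatio, add_assoc] using
    (tendsto_const_nhds.mul hfrac).mul (tendsto_choose_add_div_choose_middle ℓ)

theorem dyckPF_no_zeros_near_one (ε : ℝ) (hε : 0 < ε) :
    ∃ N : ℕ, ∀ n ≥ N, ∀ a : ℂ, ‖a - 1‖ ≤ 1 - ε → dyckPFC n a ≠ 0 := by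
  set δ := min ε 1
  have hδ : 0 < δ := lt_min hε one_pos
  have hr : ‖1 - δ‖ < 1 := by
    rw [Real.norm_eq_abs, abs_lt]
    constructor <;> linarith [min_le_right ε 1]
  have hconv := tendstoUniformlyOn_tsum_mul_pow (l := atTop) (r := 1 - δ)
    (q := fun n ℓ ↦ (dyckRatio n ℓ : ℂ)) (c := fun ℓ ↦ 2 * ℓ + 1) (M := fun ℓ ↦ 2 * ℓ + 1)
    (fun n ℓ ↦ by simpa [abs_of_nonneg (dyckRatio_nonneg n ℓ)] using dyckRatio_le n ℓ)
    (hasSum_two_mul_add_one_mul_pow hr).summable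
    (fun ℓ ↦ by exact_mod_cast (tendsto_dyckRatio ℓ).ofReal)
  obtain ⟨N, hN⟩ :=
    eventually_atTop.1 (Metric.tendstoUniformlyOn_iff.1 hconv (δ / 4) (by positivity))
  refine ⟨N, fun n hn a ha hzero ↦ ?_⟩
  have hw : ‖a - 1‖ ≤ 1 - δ := by linarith [min_le_left ε 1]
  have hw1 : ‖a - 1‖ < 1 := by linarith
  have hcatalan : ((2 * n).choose n / (n + 1) : ℂ) ≠ 0 :=
    div_ne_zero (by exact_mod_cast (Nat.choose_pos (by omega)).ne') (Nat.cast_add_one_ne_zero n)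
  rw [dyckPFC_eq_mul_tsum, mul_eq_zero, or_iff_right hcatalan] at hzero
  have hclose := hN n hn (a - 1) (by rwa [mem_closedBall, dist_zero_right])
  rw [hzero, dist_zero_right, (hasSum_two_mul_add_one_mul_pow hw1).tsum_eq] at hclose
  linarith [le_norm_one_add_div_one_sub_sq hw1]
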